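/- Let A be a commutative unital C*-algebra, let n ≥ 1, let ε with 0 < ε < 1/(5n), and let a₁,…,aₙ ∈ A satisfy max_j ‖aⱼ − aⱼ*‖ < ε and ‖∑ⱼ aⱼ² − 1‖ < ε. Set bⱼ = (aⱼ + aⱼ*)/2 and b = ∑ⱼ bⱼ². Then b is self-adjoint, ‖1 − b‖ < 1, hence b is invertible, and the elements cⱼ = bⱼ·b^{-1/2} are self-adjoint and satisfy ∑ⱼ cⱼ² = 1. -/

import Mathlib

/-!
The `bⱼ` are the real parts of the `aⱼ`, so `‖aⱼ - bⱼ‖ = ‖aⱼ - aⱼ*‖ / 2 < ε / 2`, and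
`‖aⱼ² - bⱼ²‖ ≤ ‖aⱼ - bⱼ‖ (‖aⱼ - bⱼ‖ + 2‖bⱼ‖)`. Since `0 ≤ bⱼ² ≤ b`, the C*-identity gives
`‖bⱼ‖² ≤ ‖b‖ ≤ 1 + ‖1 - b‖`, so `x = ‖1 - b‖` satisfies the self-improving estimate
`x ≤ ε + n (ε/2) (ε/2 + 2 + x)`, which forces `x < 1` when `nε < 1/5`. Then `b` is a strictly
positive unit, `b⁻¹` has a positive square root, and by commutativity `∑ cⱼ² = b b⁻¹ = 1`.
-/

open Finset ComplexStarModule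

lemma half_smul_add_star_eq_realPart {E : Type*} [AddCommGroup E] [Module ℂ E] [StarAddMonoid E]
    [StarModule ℂ E] (a : E) : (1 / 2 : ℂ) • (a + star a) = ℜ a := by
  rw [realPart_apply_coe, ← Complex.coe_smul]
  norm_num

lemma norm_sub_realPart {E : Type*} [NormedAddCommGroup E] [NormedSpace ℂ E] [StarAddMonoid E]
    [StarModule ℂ E] (a : E) : ‖a - ℜ a‖ = ‖a - star a‖ / 2 := by
  have : a - ℜ a = (2 : ℝ)⁻¹ • (a - star a) := by
    rw [realPart_apply_coe]
    module
  rw [this, norm_smul]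
  norm_num
  ring

lemma norm_sq_sub_sq_le {R : Type*} [SeminormedCommRing R] (a b : R) :
    ‖a ^ 2 - b ^ 2‖ ≤ ‖a - b‖ * (‖a - b‖ + 2 * ‖b‖) :=
  calc ‖a ^ 2 - b ^ 2‖ = ‖(a - b) * ((a - b) + b + b)‖ := by ring_nf
    _ ≤ ‖a - b‖ * (‖a - b‖ + ‖b‖ + ‖b‖) :=
      (norm_mul_le _ _).trans (by gcongr; exact norm_add₃_le)
    _ = ‖a - b‖ * (‖a - b‖ + 2 * ‖b‖) := by ring

lemma norm_le_one_add_norm_one_sub {A : Type*} [NormedRing A] [StarRing A] [CStarRing A]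
    (x : A) : ‖x‖ ≤ 1 + ‖1 - x‖ := by
  nontriviality A
  calc ‖x‖ = ‖1 - (1 - x)‖ := by rw [sub_sub_cancel]
    _ ≤ ‖(1 : A)‖ + ‖1 - x‖ := norm_sub_le _ _
    _ = 1 + ‖1 - x‖ := by rw [CStarRing.norm_one]

lemma norm_sq_le_norm_sum_sq {A ι : Type*} [CStarAlgebra A] [PartialOrder A] [StarOrderedRing A]
    {s : Finset ι} {b : ι → A} (hb : ∀ i ∈ s, IsSelfAdjoint (b i)) {j : ι} (hj : j ∈ s) :
    ‖b j‖ ^ 2 ≤ ‖∑ i ∈ s, b i ^ 2‖ := by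
  rw [← (hb j hj).norm_mul_self, ← sq]
  exact CStarAlgebra.norm_le_norm_of_nonneg_of_le (hb j hj).sq_nonneg
    (single_le_sum (fun i hi => (hb i hi).sq_nonneg) hj)

section Commutative

variable {A : Type*} [CommCStarAlgebra A] [PartialOrder A] [StarOrderedRing A]

theorem norm_one_sub_sum_sq_realPart_lt_one {ι : Type*} [Fintype ι] (a : ι → A) {ε : ℝ}
    (hε : ε ≤ 1 / 5) (hιε : Fintype.card ι * ε ≤ 1 / 5)
    (ha_star : ∀ j, ‖a j - star (a j)‖ ≤ ε) (ha_sum : ‖∑ j, a j ^ 2 - 1‖ ≤ ε) :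
    ‖1 - ∑ j, (ℜ (a j) : A) ^ 2‖ < 1 := by
  set B := ∑ j, (ℜ (a j) : A) ^ 2
  set x := ‖1 - B‖
  have hx0 : 0 ≤ x := norm_nonneg _
  have hε0 : 0 ≤ ε := (norm_nonneg _).trans ha_sum
  have h_re : ∀ j, ‖(ℜ (a j) : A)‖ ≤ 1 + x / 2 := fun j => by
    have h_sq := norm_sq_le_norm_sum_sq (fun i _ => (ℜ (a i)).2) (mem_univ j)
    nlinarith [norm_le_one_add_norm_one_sub B, norm_nonneg (ℜ (a j) : A)]
  have h_term : ∀ j, ‖a j ^ 2 - (ℜ (a j) : A) ^ 2‖ ≤ ε / 2 * (ε / 2 + 2 * (1 + x / 2)) :=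
    fun j => (norm_sq_sub_sq_le _ _).trans <| by
      rw [norm_sub_realPart]
      gcongr
      exacts [ha_star j, ha_star j, h_re j]
  have h_sum : ‖∑ j, a j ^ 2 - B‖ ≤ Fintype.card ι * (ε / 2 * (ε / 2 + 2 * (1 + x / 2))) := by
    rw [← sum_sub_distrib, ← nsmul_eq_mul, ← card_univ]
    exact (norm_sum_le _ _).trans (sum_le_card_nsmul _ _ _ fun j _ => h_term j)
  have hx : x ≤ ε + Fintype.card ι * (ε / 2 * (ε / 2 + 2 * (1 + x / 2))) :=
    calc x = ‖(∑ j, a j ^ 2 - B) - (∑ j, a j ^ 2 - 1)‖ := by rw [sub_sub_sub_cancel_left]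
      _ ≤ ‖∑ j, a j ^ 2 - B‖ + ‖∑ j, a j ^ 2 - 1‖ := norm_sub_le _ _
      _ ≤ _ := by linarith
  nlinarith [mul_le_mul_of_nonneg_right hιε hx0, mul_le_mul_of_nonneg_right hιε hε0]

end Commutative

open Finset in
/-- In a commutative unital C*-algebra, if `0 < ε < 1/(5n)` and `a₁, …, aₙ` satisfy
`‖aⱼ - aⱼ*‖ < ε` and `‖∑ aⱼ² - 1‖ < ε`, then with `bⱼ = (aⱼ + aⱼ*)/2` and `b = ∑ bⱼ²`,
`b` is self-adjoint with `‖1 - b‖ < 1`, hence invertible, and the elements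
`cⱼ = bⱼ · b^{-1/2}` are self-adjoint with `∑ cⱼ² = 1`. -/
theorem exists_sphere_tuple_near
    {A : Type*} [CommCStarAlgebra A] [PartialOrder A] [StarOrderedRing A]
    (n : ℕ) (hn : 1 ≤ n) (ε : ℝ) (hε : 0 < ε) (hε' : ε < 1 / (5 * n))
    (a : Fin n → A)
    (ha1 : ∀ j, ‖a j - star (a j)‖ < ε)
    (ha2 : ‖(∑ j, (a j) ^ 2) - 1‖ < ε)
    (b : Fin n → A) (hb : ∀ j, b j = (1 / 2 : ℂ) • (a j + star (a j)))
    (B : A) (hB : B = ∑ j, (b j) ^ 2)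
    (c : Fin n → A) (hc : ∀ j, c j = b j * CFC.sqrt (Ring.inverse B)) :
    IsSelfAdjoint B ∧ ‖1 - B‖ < 1 ∧ IsUnit B ∧
      (∀ j, IsSelfAdjoint (c j)) ∧ ∑ j, (c j) ^ 2 = 1 := by
  have hb_re : ∀ j, b j = ℜ (a j) := fun j => by rw [hb j, half_smul_add_star_eq_realPart]
  have hb_sa : ∀ j, IsSelfAdjoint (b j) := fun j => hb_re j ▸ (ℜ (a j)).2
  have hB_nonneg : 0 ≤ B := hB ▸ sum_nonneg fun j _ => (hb_sa j).sq_nonneg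
  have hn_real : (1 : ℝ) ≤ n := by exact_mod_cast hn
  have hnε : n * ε ≤ 1 / 5 := by
    have := (lt_div_iff₀ (by positivity : (0 : ℝ) < 5 * n)).mp hε'
    linarith
  have hε_small : ε ≤ 1 / 5 := by nlinarith
  have hB_near : ‖1 - B‖ < 1 := by
    simpa only [hB, hb_re] using norm_one_sub_sum_sq_realPart_lt_one a hε_small
      (by simpa using hnε) (fun j => (ha1 j).le) ha2.le
  have hB_unit : IsUnit B := by simpa using (Units.oneSub (1 - B) hB_near).isUnit
  have hB_inv : 0 ≤ Ring.inverse B := (hB_unit.isStrictlyPositive hB_nonneg).ringInverse.nonneg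
  refine ⟨hB_nonneg.isSelfAdjoint, hB_near, hB_unit, fun j => ?_, ?_⟩
  · rw [hc j]
    exact (hb_sa j).mul (CFC.sqrt_nonneg _).isSelfAdjoint
  · calc ∑ j, c j ^ 2 = (∑ j, b j ^ 2) * Ring.inverse B := by
          simp only [hc, mul_pow, CFC.sq_sqrt _ hB_inv, sum_mul]
      _ = 1 := by rw [← hB, Ring.mul_inverse_cancel B hB_unit]
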